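/- (Helly's theorem in the plane) Let F be a finite family of at least 3 convex subsets of ℝ². If every 3 members of F have a common point, then all members of F have a common point. -/

import Mathlib

/-! Since ℝ × ℝ has dimension 2, Helly's theorem in Mathlib (`Convex.helly_theorem'`) only
asks that every subfamily of at most three sets meet; the indices of a triple need not be
distinct, so such subfamilies are covered by the hypothesis. -/

open Finset

lemma Finset.exists_subset_triple {ι : Type*} [DecidableEq ι] {s : Finset ι}
    (hs : s.Nonempty) (hcard : #s ≤ 3) : ∃ i j k, s ⊆ {i, j, k} := by
  obtain h | h | h : #s = 1 ∨ #s = 2 ∨ #s = 3 := by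
    have := hs.card_pos
    omega
  · obtain ⟨i, rfl⟩ := card_eq_one.mp h
    exact ⟨i, i, i, by simp⟩
  · obtain ⟨i, j, -, rfl⟩ := card_eq_two.mp h
    exact ⟨i, j, j, by simp⟩
  · obtain ⟨i, j, k, -, -, -, rfl⟩ := card_eq_three.mp h
    exact ⟨i, j, k, subset_rfl⟩

lemma Set.biInter_nonempty_of_card_le_three {ι α : Type*} [Nonempty α] {F : ι → Set α}
    (htriple : ∀ i j k, (F i ∩ F j ∩ F k).Nonempty) {s : Finset ι} (hcard : #s ≤ 3) :
    (⋂ i ∈ s, F i).Nonempty := by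
  classical
  rcases s.eq_empty_or_nonempty with rfl | hs
  · simp
  obtain ⟨i, j, k, hsub⟩ := exists_subset_triple hs hcard
  obtain ⟨x, ⟨hxi, hxj⟩, hxk⟩ := htriple i j k
  refine ⟨x, Set.mem_iInter₂.mpr fun l hl => ?_⟩
  have hl' := hsub hl
  simp only [Finset.mem_insert, Finset.mem_singleton] at hl'
  rcases hl' with rfl | rfl | rfl
  exacts [hxi, hxj, hxk]

theorem helly_plane_general {ι : Type*} [Fintype ι]
    (F : ι → Set (ℝ × ℝ)) (hconv : ∀ i, Convex ℝ (F i))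
    (htriple : ∀ i j k, (F i ∩ F j ∩ F k).Nonempty) :
    (⋂ i, F i).Nonempty := by
  have hdim : Module.finrank ℝ (ℝ × ℝ) + 1 = 3 := by simp
  have h := Convex.helly_theorem' (𝕜 := ℝ) (s := univ) (fun i _ => hconv i)
    fun I _ hI => Set.biInter_nonempty_of_card_le_three htriple (hdim ▸ hI)
  simpa using h

/-- Helly's theorem in the plane: a finite family of at least 3 convex subsets of ℝ²,
every 3 of which have a common point, has a common point. -/
theorem helly_plane {ι : Type*} [Fintype ι] (hcard : 3 ≤ Fintype.card ι)
    (F : ι → Set (ℝ × ℝ)) (hconv : ∀ i, Convex ℝ (F i))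
    (htriple : ∀ i j k, (F i ∩ F j ∩ F k).Nonempty) :
    (⋂ i, F i).Nonempty :=
  helly_plane_general F hconv htriple
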